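/- Assume A ∈ ℝ^{N×d} and y ∈ ℝ^N satisfy the standing assumption (non-unique case). Then the minimization problem min_{x ∈ L_min} E(|x|) has a unique minimizer g*, and this minimizer satisfies supp(g*) = S. -/

import Mathlib

open scoped BigOperators

noncomputable section

/-- The ℓ¹-norm of a vector in ℝ^d. -/
def l1 {d : ℕ} (x : Fin d → ℝ) : ℝ := ∑ i, |x i|

/-- The set of ℓ¹-minimizers among the solutions of A x = y. -/
def Lmin {N d : ℕ} (A : Matrix (Fin N) (Fin d) ℝ) (y : Fin N → ℝ) : Set (Fin d → ℝ) :=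
  { x | A.mulVec x = y ∧ ∀ z, A.mulVec z = y → l1 x ≤ l1 z }

open Classical in
/-- The generalized support S = ∪_{x ∈ L_min} supp(x). -/
def genS {N d : ℕ} (A : Matrix (Fin N) (Fin d) ℝ) (y : Fin N → ℝ) : Finset (Fin d) :=
  Finset.univ.filter (fun i => ∃ x ∈ Lmin A y, x i ≠ 0)

/-- The tangent space T = span{x - x' : x, x' ∈ L_min}. -/
def Tspace {N d : ℕ} (A : Matrix (Fin N) (Fin d) ℝ) (y : Fin N → ℝ) :
    Submodule ℝ (Fin d → ℝ) :=
  Submodule.span ℝ { v | ∃ x ∈ Lmin A y, ∃ x' ∈ Lmin A y, v = x - x' }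

/-- The set of quotients whose supremum is the generalized null space constant ρ(N). -/
def grhoSet {d : ℕ} (S : Finset (Fin d)) (σ : Fin d → ℝ) (Nset : Set (Fin d → ℝ)) :
    Set ℝ :=
  { r | ∃ n ∈ Nset, n ≠ 0 ∧ r = (-∑ i ∈ S, σ i * n i) / ∑ i ∈ Sᶜ, |n i| }

/-- The generalized null space constant ρ(N). -/
def grho {d : ℕ} (S : Finset (Fin d)) (σ : Fin d → ℝ) (Nset : Set (Fin d → ℝ)) : ℝ :=
  sSup (grhoSet S σ Nset)

/-- The set of quotients whose supremum is the generalized null space constant ρ⁻(N). -/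
def grhoMinusSet {d : ℕ} (S : Finset (Fin d)) (σ : Fin d → ℝ) (Nset : Set (Fin d → ℝ)) :
    Set ℝ :=
  { r | ∃ n ∈ Nset, n ≠ 0 ∧
      r = (∑ i ∈ S.filter (fun i => σ i * n i < 0), |n i|) / ∑ i ∈ Sᶜ, |n i| }

/-- The generalized null space constant ρ⁻(N). -/
def grhoMinus {d : ℕ} (S : Finset (Fin d)) (σ : Fin d → ℝ) (Nset : Set (Fin d → ℝ)) : ℝ :=
  sSup (grhoMinusSet S σ Nset)

/-- The set of quotients whose supremum is the generalized null space constant ρ̃(N). -/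
def grhoTildeSet {d : ℕ} (S : Finset (Fin d)) (σ : Fin d → ℝ) (Nset : Set (Fin d → ℝ)) :
    Set ℝ :=
  { r | ∃ n ∈ Nset, n ≠ 0 ∧ r = (∑ i ∈ S, |n i|) / ∑ i ∈ Sᶜ, |n i| }

/-- The generalized null space constant ρ̃(N). -/
def grhoTilde {d : ℕ} (S : Finset (Fin d)) (σ : Fin d → ℝ) (Nset : Set (Fin d → ℝ)) : ℝ :=
  sSup (grhoTildeSet S σ Nset)

/-- The entropy functional E(x) = ∑_{i : x_i ≠ 0} (x_i log x_i - x_i) (for x ≥ 0). -/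
def Ent {d : ℕ} (x : Fin d → ℝ) : ℝ :=
  ∑ i ∈ Finset.univ.filter (fun i => x i ≠ 0), (x i * Real.log (x i) - x i)

/-- The support of a vector, as a finset of indices. -/
def suppF {d : ℕ} (g : Fin d → ℝ) : Finset (Fin d) :=
  Finset.univ.filter (fun i => g i ≠ 0)

/-!
The map `x ↦ |x|` is affine on `L_min`: the midpoint of two ℓ¹-minimizers is again one, which
forces equality in the triangle inequality coordinatewise, so all elements of `L_min` share a sign
pattern and `|·|` is even injective there. Hence `x ↦ E(|x|)` inherits strict convexity from
`t ↦ t log t - t` on the compact convex set `L_min`, and has a unique minimizer `g`. If `g i = 0`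
while `x i ≠ 0` for some `x ∈ L_min`, then moving from `g` towards `x` by `t` changes the entropy by
at most `t (E(|x|) - E(|g|) + |x i| log t)`, which is negative for small `t` since the
derivative of `t log t` is `-∞` at `0`.
-/

section

open Finset Real Filter Topology

def entropyDensity (t : ℝ) : ℝ := t * log t - t

lemma continuous_entropyDensity : Continuous entropyDensity :=
  continuous_mul_log.sub continuous_id

lemma strictConvexOn_entropyDensity : StrictConvexOn ℝ (Set.Ici 0) entropyDensity :=
  strictConvexOn_mul_log.sub_concaveOn (concaveOn_id (convex_Ici 0))

lemma entropyDensity_mul {t : ℝ} (ht : 0 < t) (a : ℝ) :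
    entropyDensity (t * a) = t * entropyDensity a + t * a * log t := by
  rcases eq_or_ne a 0 with rfl | ha
  · simp [entropyDensity]
  · rw [entropyDensity, entropyDensity, log_mul ht.ne' ha]
    ring

lemma abs_mul_add_mul_le {a b : ℝ} (ha : 0 ≤ a) (hb : 0 ≤ b) (u v : ℝ) :
    |a * u + b * v| ≤ a * |u| + b * |v| := by
  simpa only [abs_mul, abs_of_nonneg ha, abs_of_nonneg hb] using abs_add_le (a * u) (b * v)

lemma abs_mul_add_mul_of_mul_nonneg {a b u v : ℝ} (ha : 0 ≤ a) (hb : 0 ≤ b)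
    (huv : 0 ≤ u * v) :
    |a * u + b * v| = a * |u| + b * |v| := by
  rcases mul_nonneg_iff.1 huv with ⟨hu, hv⟩ | ⟨hu, hv⟩
  · rw [abs_of_nonneg (by positivity), abs_of_nonneg hu, abs_of_nonneg hv]
  · rw [abs_of_nonpos (by nlinarith), abs_of_nonpos hu, abs_of_nonpos hv]
    ring

lemma mul_nonneg_of_abs_mul_add_mul_eq {a b u v : ℝ} (ha : 0 < a) (hb : 0 < b)
    (h : |a * u + b * v| = a * |u| + b * |v|) : 0 ≤ u * v := by
  rcases le_total 0 u with hu | hu <;> rcases le_total 0 v with hv | hv <;>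
    simp only [abs_of_nonneg, abs_of_nonpos, hu, hv] at h <;>
    rcases abs_cases (a * u + b * v) with ⟨h1, _⟩ | ⟨h1, _⟩ <;> nlinarith

lemma eq_of_abs_eq_of_mul_nonneg {u v : ℝ} (h : |u| = |v|) (huv : 0 ≤ u * v) : u = v := by
  rcases abs_eq_abs.1 h with h | rfl
  · exact h
  · nlinarith

variable {N d : ℕ}

def absEntropy (x : Fin d → ℝ) : ℝ := ∑ i, entropyDensity |x i|

lemma Ent_abs_eq_absEntropy (x : Fin d → ℝ) : Ent (fun i => |x i|) = absEntropy x := by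
  rw [Ent, absEntropy, sum_filter]
  refine sum_congr rfl fun i _ => ?_
  split_ifs with h
  · rfl
  · simp [not_not.1 h, entropyDensity]

lemma continuous_absEntropy : Continuous (absEntropy (d := d)) :=
  continuous_finsetSum _ fun i _ => continuous_entropyDensity.comp (continuous_apply i).abs

lemma absEntropy_smul_add_smul_lt {x x' : Fin d → ℝ} (hxx' : ∀ j, 0 ≤ x j * x' j)
    (hne : x ≠ x') {a b : ℝ} (ha : 0 < a) (hb : 0 < b) (hab : a + b = 1) :
    absEntropy (a • x + b • x') < a * absEntropy x + b * absEntropy x' := by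
  obtain ⟨i, hi⟩ := Function.ne_iff.1 hne
  have habs : ∀ j, |(a • x + b • x') j| = a * |x j| + b * |x' j| := fun j =>
    abs_mul_add_mul_of_mul_nonneg ha.le hb.le (hxx' j)
  simp only [absEntropy, habs, mul_sum, ← sum_add_distrib]
  refine sum_lt_sum (fun j _ => ?_) ⟨i, mem_univ i, ?_⟩
  · exact strictConvexOn_entropyDensity.convexOn.2 (Set.mem_Ici.2 (abs_nonneg _))
      (Set.mem_Ici.2 (abs_nonneg _)) ha.le hb.le hab
  · exact strictConvexOn_entropyDensity.2 (Set.mem_Ici.2 (abs_nonneg _))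
      (Set.mem_Ici.2 (abs_nonneg _)) (fun h => hi (eq_of_abs_eq_of_mul_nonneg h (hxx' i))) ha hb hab

lemma absEntropy_segment_le_of_eq_zero {g x : Fin d → ℝ} (hgx : ∀ j, 0 ≤ g j * x j)
    {i : Fin d} (hgi : g i = 0) {t : ℝ} (ht0 : 0 < t) (ht1 : t ≤ 1) :
    absEntropy ((1 - t) • g + t • x)
      ≤ (1 - t) * absEntropy g + t * absEntropy x + t * |x i| * log t := by
  have hterm : ∀ j ∈ univ, entropyDensity |((1 - t) • g + t • x) j|
      ≤ (1 - t) * entropyDensity |g j| + t * entropyDensity |x j|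
        + if i = j then t * |x i| * log t else 0 := by
    intro j _
    have habs : |((1 - t) • g + t • x) j| = (1 - t) * |g j| + t * |x j| :=
      abs_mul_add_mul_of_mul_nonneg (sub_nonneg.2 ht1) ht0.le (hgx j)
    rw [habs]
    split_ifs with hij
    · subst hij
      rw [hgi, abs_zero, mul_zero, zero_add, entropyDensity_mul ht0]
      simp [entropyDensity]
    · rw [add_zero]
      exact strictConvexOn_entropyDensity.convexOn.2 (Set.mem_Ici.2 (abs_nonneg _))
        (Set.mem_Ici.2 (abs_nonneg _)) (sub_nonneg.2 ht1) ht0.le (by ring)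
  calc absEntropy ((1 - t) • g + t • x) ≤ _ := sum_le_sum hterm
    _ = _ := by simp only [absEntropy, sum_add_distrib, mul_sum, sum_ite_eq, mem_univ, if_true]

lemma norm_le_l1 (x : Fin d → ℝ) : ‖x‖ ≤ l1 x :=
  (pi_norm_le_iff_of_nonneg (sum_nonneg fun j _ => abs_nonneg (x j))).2 fun i =>
    single_le_sum (fun j _ => abs_nonneg (x j)) (mem_univ i)

lemma continuous_l1 : Continuous (l1 (d := d)) :=
  continuous_finsetSum _ fun i _ => (continuous_apply i).abs

lemma l1_smul_add_smul_le (x x' : Fin d → ℝ) {a b : ℝ} (ha : 0 ≤ a) (hb : 0 ≤ b) :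
    l1 (a • x + b • x') ≤ a * l1 x + b * l1 x' := by
  simp only [l1, mul_sum, ← sum_add_distrib]
  exact sum_le_sum fun j _ => abs_mul_add_mul_le ha hb (x j) (x' j)

variable {A : Matrix (Fin N) (Fin d) ℝ} {y : Fin N → ℝ}

lemma isCompact_solutions_l1_le (c : ℝ) : IsCompact {x | A.mulVec x = y ∧ l1 x ≤ c} := by
  refine Metric.isCompact_of_isClosed_isBounded ?_ ?_
  · exact (isClosed_eq (continuous_const.matrix_mulVec continuous_id) continuous_const).inter
      (isClosed_le continuous_l1 continuous_const)
  · exact isBounded_iff_forall_norm_le.2 ⟨c, fun x hx => (norm_le_l1 x).trans hx.2⟩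

lemma Lmin_eq_solutions_l1_le {x₀ : Fin d → ℝ} (hx₀ : x₀ ∈ Lmin A y) :
    Lmin A y = {x | A.mulVec x = y ∧ l1 x ≤ l1 x₀} :=
  Set.ext fun _ => ⟨fun hx => ⟨hx.1, hx.2 x₀ hx₀.1⟩,
    fun hx => ⟨hx.1, fun z hz => hx.2.trans (hx₀.2 z hz)⟩⟩

lemma Lmin_nonempty (hex : ∃ x, A.mulVec x = y) : (Lmin A y).Nonempty := by
  obtain ⟨x₀, hx₀⟩ := hex
  obtain ⟨g, hg, hmin⟩ := (isCompact_solutions_l1_le (A := A) (y := y) (l1 x₀)).exists_isMinOn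
    ⟨x₀, hx₀, le_rfl⟩ continuous_l1.continuousOn
  refine ⟨g, hg.1, fun z hz => ?_⟩
  rcases le_total (l1 z) (l1 x₀) with hz₀ | hz₀
  · exact hmin ⟨hz, hz₀⟩
  · exact (hmin ⟨hx₀, le_rfl⟩).trans hz₀

lemma isCompact_Lmin : IsCompact (Lmin A y) := by
  rcases (Lmin A y).eq_empty_or_nonempty with h | ⟨x₀, hx₀⟩
  · exact h ▸ isCompact_empty
  · exact Lmin_eq_solutions_l1_le hx₀ ▸ isCompact_solutions_l1_le _

lemma l1_eq_of_mem_Lmin {x x' : Fin d → ℝ} (hx : x ∈ Lmin A y) (hx' : x' ∈ Lmin A y) :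
    l1 x = l1 x' :=
  (hx.2 x' hx'.1).antisymm (hx'.2 x hx.1)

lemma convex_Lmin : Convex ℝ (Lmin A y) := by
  intro x hx x' hx' a b ha hb hab
  refine ⟨?_, fun z hz => ?_⟩
  · rw [Matrix.mulVec_add, Matrix.mulVec_smul, Matrix.mulVec_smul, hx.1, hx'.1, ← add_smul, hab,
      one_smul]
  · calc l1 (a • x + b • x') ≤ a * l1 x + b * l1 x' := l1_smul_add_smul_le x x' ha hb
      _ ≤ a * l1 z + b * l1 z := by gcongr; exacts [hx.2 z hz, hx'.2 z hz]
      _ = l1 z := by rw [← add_mul, hab, one_mul]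

lemma mul_nonneg_of_mem_Lmin {x x' : Fin d → ℝ} (hx : x ∈ Lmin A y) (hx' : x' ∈ Lmin A y)
    (i : Fin d) : 0 ≤ x i * x' i := by
  have hhalf : (0 : ℝ) < 1 / 2 := by norm_num
  have hmid := convex_Lmin hx hx' hhalf.le hhalf.le (by norm_num)
  have hterm : ∀ j ∈ univ, |1 / 2 * x j + 1 / 2 * x' j| ≤ 1 / 2 * |x j| + 1 / 2 * |x' j| :=
    fun j _ => abs_mul_add_mul_le hhalf.le hhalf.le (x j) (x' j)
  have hsum : ∑ j, |1 / 2 * x j + 1 / 2 * x' j| = ∑ j, (1 / 2 * |x j| + 1 / 2 * |x' j|) := by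
    rw [sum_add_distrib, ← mul_sum, ← mul_sum]
    change l1 ((1 / 2 : ℝ) • x + (1 / 2 : ℝ) • x') = 1 / 2 * l1 x + 1 / 2 * l1 x'
    rw [l1_eq_of_mem_Lmin hmid hx, l1_eq_of_mem_Lmin hx' hx]
    ring
  exact mul_nonneg_of_abs_mul_add_mul_eq hhalf hhalf
    ((sum_eq_sum_iff_of_le hterm).1 hsum i (mem_univ i))

lemma strictConvexOn_absEntropy_Lmin : StrictConvexOn ℝ (Lmin A y) absEntropy :=
  ⟨convex_Lmin, fun _ hx _ hx' hne _ _ ha hb hab =>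
    absEntropy_smul_add_smul_lt (mul_nonneg_of_mem_Lmin hx hx') hne ha hb hab⟩

lemma ne_zero_of_isMinOn_absEntropy {g x : Fin d → ℝ} (hmin : IsMinOn absEntropy (Lmin A y) g)
    (hg : g ∈ Lmin A y) (hx : x ∈ Lmin A y) {i : Fin d} (hxi : x i ≠ 0) : g i ≠ 0 := by
  intro hgi
  have hlog : ∀ᶠ t in 𝓝[>] 0, |x i| * log t < absEntropy g - absEntropy x :=
    (tendsto_log_nhdsGT_zero.const_mul_atBot (abs_pos.2 hxi)).eventually_lt_atBot _
  obtain ⟨t, hlt, ht0, ht1⟩ := (hlog.and (Ioc_mem_nhdsGT one_pos)).exists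
  have hseg := absEntropy_segment_le_of_eq_zero (mul_nonneg_of_mem_Lmin hg hx) hgi ht0 ht1
  have hle : absEntropy g ≤ absEntropy ((1 - t) • g + t • x) :=
    hmin (convex_Lmin hg hx (sub_nonneg.2 ht1) ht0.le (by ring))
  nlinarith

end

theorem entropy_minimizer_unique_maximal_support_general {N d : ℕ}
    (A : Matrix (Fin N) (Fin d) ℝ) (y : Fin N → ℝ)
    (hex : ∃ x : Fin d → ℝ, A.mulVec x = y) :
    ∃ g : Fin d → ℝ,
      (g ∈ Lmin A y ∧ ∀ x ∈ Lmin A y, Ent (fun i => |g i|) ≤ Ent (fun i => |x i|)) ∧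
      (∀ g' ∈ Lmin A y,
        (∀ x ∈ Lmin A y, Ent (fun i => |g' i|) ≤ Ent (fun i => |x i|)) → g' = g) ∧
      suppF g = genS A y := by
  obtain ⟨g, hg, hmin⟩ :=
    isCompact_Lmin.exists_isMinOn (Lmin_nonempty hex) continuous_absEntropy.continuousOn
  simp only [Ent_abs_eq_absEntropy]
  refine ⟨g, ⟨hg, fun x hx => hmin hx⟩,
    fun g' hg' hmin' => strictConvexOn_absEntropy_Lmin.eq_of_isMinOn hmin' hmin hg' hg, ?_⟩
  ext i
  simp only [suppF, genS, Finset.mem_filter, Finset.mem_univ, true_and]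
  exact ⟨fun hgi => ⟨g, hg, hgi⟩,
    fun ⟨x, hx, hxi⟩ => ne_zero_of_isMinOn_absEntropy hmin hg hx hxi⟩

/-- the entropy minimizer over L_min is unique and has maximal support. -/
theorem entropy_minimizer_unique_maximal_support {N d : ℕ}
    (A : Matrix (Fin N) (Fin d) ℝ) (y : Fin N → ℝ)
    (hex : ∃ x : Fin d → ℝ, A.mulVec x = y)
    (hy : y ≠ 0)
    (hker : ∃ n : Fin d → ℝ, n ≠ 0 ∧ A.mulVec n = 0) :
    ∃ g : Fin d → ℝ,
      (g ∈ Lmin A y ∧ ∀ x ∈ Lmin A y, Ent (fun i => |g i|) ≤ Ent (fun i => |x i|)) ∧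
      (∀ g' ∈ Lmin A y,
        (∀ x ∈ Lmin A y, Ent (fun i => |g' i|) ≤ Ent (fun i => |x i|)) → g' = g) ∧
      suppF g = genS A y :=
  entropy_minimizer_unique_maximal_support_general A y hex
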